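/- Let G be a group and let (𝒳,ρ) be a finite categorified G-set whose underlying category is not equivalent (as a plain category) to any discrete category. Then there exist no finite right G-sets Y and Z and no finite categorified G-set ℰ such that 𝒳 ⊎ I(Z) ⊎ ℰ is weakly equivalent to I(Y) ⊎ ℰ. In particular, the induced ring homomorphism from the classical Burnside ring of G to the categorified Burnside ring of G is not surjective. -/

import Mathlib

/-!
Common framework: a *categorified `G`-set* is a (small) category `C` equipped with a right
`G`-action by endofunctors, i.e. functors `ρ g : C ⥤ C` with `ρ 1 = 𝟭 C` and
`ρ (g * h) = ρ g ⋙ ρ h`.  Equivariant functors, equivariant natural transformations and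
weak equivalences are as in the paper.
-/

open CategoryTheory

universe w v u v₁ v₂ v₃ v₄ u₁ u₂ u₃ u₄

/-- A right action of a group `G` on a category `C` by endofunctors: the data making the
category `C` into a *categorified `G`-set*. -/
structure CatAction (G : Type w) [Group G] (C : Type u) [Category.{v} C] where
  ρ : G → C ⥤ C
  map_one : ρ 1 = 𝟭 C
  map_mul : ∀ g h : G, ρ (g * h) = ρ g ⋙ ρ h

variable {G : Type w} [Group G]

/-- Equivariance of a functor between categorified `G`-sets. -/
def IsEquivF {C : Type u₁} {D : Type u₂} [Category.{v₁} C] [Category.{v₂} D]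
    (ρ : CatAction G C) (σ : CatAction G D) (F : C ⥤ D) : Prop :=
  ∀ g : G, ρ.ρ g ⋙ F = F ⋙ σ.ρ g

theorem IsEquivF.id {C : Type u₁} [Category.{v₁} C] (ρ : CatAction G C) :
    IsEquivF ρ ρ (𝟭 C) := fun _ => rfl

theorem IsEquivF.comp {C : Type u₁} {D : Type u₂} {E : Type u₃}
    [Category.{v₁} C] [Category.{v₂} D] [Category.{v₃} E]
    {ρ : CatAction G C} {σ : CatAction G D} {τ : CatAction G E}
    {F : C ⥤ D} {P : D ⥤ E} (hF : IsEquivF ρ σ F) (hP : IsEquivF σ τ P) :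
    IsEquivF ρ τ (F ⋙ P) := fun g => by
  rw [← Functor.assoc, hF g, Functor.assoc, hP g, ← Functor.assoc]

/-- Equivariance of a natural transformation between equivariant functors: at every object
`x` the component at `ρ g x` coincides (through the canonical identifications) with `σ g`
applied to the component at `x`. -/
def IsEquivNT {C : Type u₁} {D : Type u₂} [Category.{v₁} C] [Category.{v₂} D]
    (ρ : CatAction G C) (σ : CatAction G D) {F F' : C ⥤ D}
    (hF : IsEquivF ρ σ F) (hF' : IsEquivF ρ σ F') (α : F ⟶ F') : Prop :=
  ∀ (g : G) (x : C),
    α.app ((ρ.ρ g).obj x) =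
      eqToHom (Functor.congr_obj (hF g) x) ≫ (σ.ρ g).map (α.app x) ≫
        eqToHom (Functor.congr_obj (hF' g) x).symm

/-- Weak equivalence of categorified `G`-sets: a pair of equivariant functors, quasi-inverse
to each other through equivariant natural isomorphisms. -/
def WeakEquivCat {C : Type u₁} {D : Type u₂} [Category.{v₁} C] [Category.{v₂} D]
    (ρ : CatAction G C) (σ : CatAction G D) : Prop :=
  ∃ (F : C ⥤ D) (P : D ⥤ C) (hF : IsEquivF ρ σ F) (hP : IsEquivF σ ρ P)
    (η : F ⋙ P ≅ 𝟭 C) (ε : P ⋙ F ≅ 𝟭 D),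
    IsEquivNT ρ ρ (hF.comp hP) (IsEquivF.id ρ) η.hom ∧
    IsEquivNT σ σ (hP.comp hF) (IsEquivF.id σ) ε.hom
section SumPart

variable {C : Type u} {D : Type u} [Category.{v} C] [Category.{v} D]

theorem sum_id_id : (𝟭 C).sum (𝟭 D) = 𝟭 (C ⊕ D) :=
  CategoryTheory.Functor.ext (fun X => by cases X <;> rfl)
    (fun X Y f => by cases X <;> cases Y <;> obtain ⟨f⟩ := f <;>
      exact ((Category.id_comp _).trans (Category.comp_id _)).symm)

theorem sum_comp_sum {C' D' C'' D'' : Type u}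
    [Category.{v} C'] [Category.{v} D'] [Category.{v} C''] [Category.{v} D'']
    (F : C ⥤ C') (F' : C' ⥤ C'') (K : D ⥤ D') (K' : D' ⥤ D'') :
    (F ⋙ F').sum (K ⋙ K') = F.sum K ⋙ F'.sum K' :=
  CategoryTheory.Functor.ext (fun X => by cases X <;> rfl)
    (fun X Y f => by cases X <;> cases Y <;> obtain ⟨f⟩ := f <;>
      exact ((Category.id_comp _).trans (Category.comp_id _)).symm)

/-- The disjoint union of two categorified `G`-sets, with the componentwise action. -/
def CatAction.sum (ρ : CatAction G C) (τ : CatAction G D) : CatAction G (C ⊕ D) where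
  ρ g := (ρ.ρ g).sum (τ.ρ g)
  map_one := by simp only [ρ.map_one, τ.map_one, sum_id_id]
  map_mul g h := by simp only [ρ.map_mul, τ.map_mul, sum_comp_sum]

end SumPart
section RightActions

/-- A right action of the group `G` on a type `X`: a right `G`-set. -/
structure RightAction (G : Type w) [Group G] (X : Type u) where
  act : X → G → X
  act_one : ∀ x, act x 1 = x
  act_mul : ∀ (x : X) (g h : G), act x (g * h) = act (act x g) h

/-- Equivariant maps of right `G`-sets. -/
def IsEquivMap {X : Type u₁} {Y : Type u₂} (a : RightAction G X) (b : RightAction G Y)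
    (φ : X → Y) : Prop :=
  ∀ (x : X) (g : G), φ (a.act x g) = b.act (φ x) g

/-- The discrete categorified `G`-set `I(X)` associated to a right `G`-set `X`. -/
def discAction {X : Type u} (a : RightAction G X) : CatAction G (Discrete X) where
  ρ g := Discrete.functor fun x => ⟨a.act x g⟩
  map_one := CategoryTheory.Functor.ext
    (fun x => by cases x with | mk x => simp [a.act_one])
    (fun _ _ _ => Subsingleton.elim _ _)
  map_mul g h := CategoryTheory.Functor.ext
    (fun x => by cases x with | mk x => simp [a.act_mul])
    (fun _ _ _ => Subsingleton.elim _ _)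

/-- The trivial action of `G` on any category. -/
def trivialCatAction (G : Type w) [Group G] (C : Type u) [Category.{v} C] :
    CatAction G C where
  ρ _ := 𝟭 C
  map_one := rfl
  map_mul _ _ := rfl

end RightActions

/-!
A category is equivalent to a discrete one exactly when it is discrete at each object `x`:
every morphism out of `x` is invertible and is the only morphism between its ends. Count the
isomorphism classes of objects at which a category is not discrete. This count is invariant
under equivalence, additive on disjoint unions and zero on discrete categories. Forgetting the
actions, a weak equivalence `𝒳 ⊎ I(Z) ⊎ ℰ ≃ I(Y) ⊎ ℰ` is an equivalence of categories, so the
counts satisfy `n(𝒳) + n(ℰ) = n(ℰ)`. Since `ℰ` is finite, `n(𝒳) = 0`, and then `𝒳` is equivalent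
to the discrete category on its skeleton.
-/

theorem isEmpty_of_sum_equiv {α β : Type*} [Finite β] (e : α ⊕ β ≃ β) : IsEmpty α := by
  have : Finite (α ⊕ β) := .of_equiv _ e.symm
  have : Finite α := .of_injective (Sum.inl : α → α ⊕ β) Sum.inl_injective
  have hcard := Nat.card_congr e
  rw [Nat.card_sum] at hcard
  exact Finite.card_eq_zero_iff.1 (by omega)

namespace CategoryTheory

section IsDiscreteAt

variable {A : Type u₁} [Category.{v₁} A] {B : Type u₂} [Category.{v₂} B]

def IsDiscreteAt (x : A) : Prop :=
  ∀ y : A, Subsingleton (x ⟶ y) ∧ ∀ f : x ⟶ y, IsIso f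

theorem IsDiscreteAt.of_iso {x x' : A} (i : x ≅ x') (h : IsDiscreteAt x) : IsDiscreteAt x' :=
  fun y =>
    have := (h y).1
    ⟨⟨fun _ _ => (cancel_epi i.hom).1 (Subsingleton.elim _ _)⟩,
      fun f => have := (h y).2 (i.hom ≫ f); IsIso.of_isIso_comp_left i.hom f⟩

theorem Iso.isDiscreteAt_iff {x x' : A} (i : x ≅ x') : IsDiscreteAt x ↔ IsDiscreteAt x' :=
  ⟨.of_iso i, .of_iso i.symm⟩

theorem IsDiscreteAt.of_fullyFaithful {F : A ⥤ B} (hF : F.FullyFaithful) {x : A}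
    (h : IsDiscreteAt (F.obj x)) : IsDiscreteAt x :=
  fun y =>
    have := (h (F.obj y)).1
    ⟨⟨fun _ _ => hF.map_injective (Subsingleton.elim _ _)⟩,
      fun f => have := (h (F.obj y)).2 (F.map f); hF.isIso_of_isIso_map f⟩

theorem Equivalence.isDiscreteAt_functor_obj_iff (e : A ≌ B) {x : A} :
    IsDiscreteAt (e.functor.obj x) ↔ IsDiscreteAt x :=
  ⟨.of_fullyFaithful e.fullyFaithfulFunctor,
    fun h => .of_fullyFaithful e.fullyFaithfulInverse (h.of_iso (e.unitIso.app x))⟩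

theorem IsDiscrete.isDiscreteAt [IsDiscrete A] (x : A) : IsDiscreteAt x :=
  fun _ => ⟨inferInstance, fun _ => inferInstance⟩

end IsDiscreteAt

section Sum

variable (A : Type u₁) [Category.{v₁} A] (B : Type u₂) [Category.{v₂} B]

def Sum.fullyFaithfulInl : (Sum.inl_ A B).FullyFaithful where
  preimage f := f.down

def Sum.fullyFaithfulInr : (Sum.inr_ A B).FullyFaithful where
  preimage f := f.down

instance : (Sum.inl_ A B).Full := (Sum.fullyFaithfulInl A B).full
instance : (Sum.inl_ A B).Faithful := (Sum.fullyFaithfulInl A B).faithful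
instance : (Sum.inr_ A B).Full := (Sum.fullyFaithfulInr A B).full
instance : (Sum.inr_ A B).Faithful := (Sum.fullyFaithfulInr A B).faithful

variable {A B}

theorem Sum.isDiscreteAt_inl_iff {x : A} : IsDiscreteAt (Sum.inl x : A ⊕ B) ↔ IsDiscreteAt x := by
  refine ⟨.of_fullyFaithful (Sum.fullyFaithfulInl A B), fun h y => ?_⟩
  rcases y with y | y
  · have := (h y).1
    refine ⟨(Sum.fullyFaithfulInl A B).homEquiv.symm.subsingleton, fun f => ?_⟩
    have := (h y).2 f.down
    exact (Sum.inl_ A B).map_isIso f.down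
  · exact ⟨⟨fun f => (hom_inl_inr_false _ _ f).elim⟩, fun f => (hom_inl_inr_false _ _ f).elim⟩

theorem Sum.isDiscreteAt_inr_iff {x : B} : IsDiscreteAt (Sum.inr x : A ⊕ B) ↔ IsDiscreteAt x := by
  refine ⟨.of_fullyFaithful (Sum.fullyFaithfulInr A B), fun h y => ?_⟩
  rcases y with y | y
  · exact ⟨⟨fun f => (hom_inr_inl_false _ _ f).elim⟩, fun f => (hom_inr_inl_false _ _ f).elim⟩
  · have := (h y).1
    refine ⟨(Sum.fullyFaithfulInr A B).homEquiv.symm.subsingleton, fun f => ?_⟩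
    have := (h y).2 f.down
    exact (Sum.inr_ A B).map_isIso f.down

noncomputable def Skeleton.sumEquiv : Skeleton A ⊕ Skeleton B ≃ Skeleton (A ⊕ B) := by
  refine Equiv.ofBijective (Sum.elim (Sum.inl_ A B).mapSkeleton.obj
    (Sum.inr_ A B).mapSkeleton.obj) ⟨?_, ?_⟩
  · refine (Functor.mapSkeleton_injective _).sumElim (Functor.mapSkeleton_injective _) ?_
    intro a b hab
    obtain ⟨a, rfl⟩ : ∃ x, toSkeleton x = a := ⟨_, toSkeleton_fromSkeleton_obj a⟩
    obtain ⟨b, rfl⟩ : ∃ x, toSkeleton x = b := ⟨_, toSkeleton_fromSkeleton_obj b⟩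
    rw [Functor.mapSkeleton_obj_toSkeleton, Functor.mapSkeleton_obj_toSkeleton,
      toSkeleton_eq_toSkeleton_iff] at hab
    exact hom_inl_inr_false _ _ hab.some.hom
  · intro s
    obtain ⟨a | b, rfl⟩ : ∃ x, toSkeleton x = s := ⟨_, toSkeleton_fromSkeleton_obj s⟩
    · exact ⟨.inl (toSkeleton a), Functor.mapSkeleton_obj_toSkeleton _ a⟩
    · exact ⟨.inr (toSkeleton b), Functor.mapSkeleton_obj_toSkeleton _ b⟩

end Sum

section NonDiscreteClasses

variable {A : Type u₁} [Category.{v₁} A] {B : Type u₂} [Category.{v₂} B]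

theorem isDiscreteAt_fromSkeleton_toSkeleton_iff (x : A) :
    IsDiscreteAt ((fromSkeleton A).obj (toSkeleton x)) ↔ IsDiscreteAt x :=
  (fromSkeletonToSkeletonIso x).isDiscreteAt_iff

theorem Functor.isDiscreteAt_fromSkeleton_mapSkeleton_obj_iff (F : A ⥤ B) (s : Skeleton A) :
    IsDiscreteAt ((fromSkeleton B).obj (F.mapSkeleton.obj s)) ↔
      IsDiscreteAt (F.obj ((fromSkeleton A).obj s)) :=
  isDiscreteAt_fromSkeleton_toSkeleton_iff _

variable (A) in
def NonDiscreteClasses : Type u₁ :=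
  {s : Skeleton A // ¬ IsDiscreteAt ((fromSkeleton A).obj s)}

noncomputable def Equivalence.nonDiscreteClassesEquiv (e : A ≌ B) :
    NonDiscreteClasses A ≃ NonDiscreteClasses B :=
  e.skeletonEquiv.subtypeEquiv fun s =>
    (e.functor.isDiscreteAt_fromSkeleton_mapSkeleton_obj_iff s |>.trans
      e.isDiscreteAt_functor_obj_iff).not.symm

noncomputable def nonDiscreteClassesSumEquiv :
    NonDiscreteClasses A ⊕ NonDiscreteClasses B ≃ NonDiscreteClasses (A ⊕ B) :=
  (Equiv.subtypeSum (p := Sum.elim (fun s => ¬ IsDiscreteAt ((fromSkeleton A).obj s))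
    fun s => ¬ IsDiscreteAt ((fromSkeleton B).obj s))).symm.trans <|
      Skeleton.sumEquiv.subtypeEquiv fun
        | .inl s => ((Sum.inl_ A B).isDiscreteAt_fromSkeleton_mapSkeleton_obj_iff s |>.trans
            Sum.isDiscreteAt_inl_iff).not.symm
        | .inr s => ((Sum.inr_ A B).isDiscreteAt_fromSkeleton_mapSkeleton_obj_iff s |>.trans
            Sum.isDiscreteAt_inr_iff).not.symm

instance [Finite A] : Finite (NonDiscreteClasses A) :=
  have : Finite (Skeleton A) := Quotient.finite _
  Subtype.finite

instance [IsDiscrete A] : IsEmpty (NonDiscreteClasses A) :=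
  ⟨fun s => s.2 (IsDiscrete.isDiscreteAt _)⟩

theorem isDiscrete_skeleton_of_isEmpty_nonDiscreteClasses [IsEmpty (NonDiscreteClasses A)] :
    IsDiscrete (Skeleton A) :=
  have h (s : Skeleton A) : IsDiscreteAt s :=
    .of_fullyFaithful (skeletonEquivalence A).fullyFaithfulFunctor
      (not_not.1 fun hs => IsEmpty.false (α := NonDiscreteClasses A) ⟨s, hs⟩)
  { subsingleton s t := (h s t).1
    eq_of_hom f := skeleton_skeletal A ⟨@asIso _ _ _ _ f ((h _ _).2 f)⟩ }

end NonDiscreteClasses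

noncomputable def IsDiscrete.equivalenceDiscrete (A : Type u₁) [Category.{v₁} A] [IsDiscrete A] :
    A ≌ Discrete A where
  functor :=
    { obj := Discrete.mk
      map f := eqToHom (congrArg _ (obj_ext_of_isDiscrete f)) }
  inverse := Discrete.functor id
  unitIso := NatIso.ofComponents (fun _ => Iso.refl _)
  counitIso := Discrete.natIso fun _ => Iso.refl _

end CategoryTheory

/-- Let `𝒳` be a finite categorified `G`-set whose underlying category is
not equivalent (as a plain category) to any discrete category.  Then there are no finite
right `G`-sets `Y`, `Z` and no finite categorified `G`-set `ℰ` with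
`𝒳 ⊎ I(Z) ⊎ ℰ` weakly equivalent to `I(Y) ⊎ ℰ`.  (In particular the induced ring
homomorphism from the classical Burnside ring to the categorified Burnside ring is not
surjective.) -/
theorem burnside_comparison_not_surjective {G : Type w} [Group G]
    {C : Type u} [SmallCategory C] [Finite C] [∀ x y : C, Finite (x ⟶ y)]
    (ρ : CatAction G C) (hC : ∀ T : Type u, IsEmpty (C ≌ Discrete T)) :
    ¬ ∃ (Y Z : Type u) (bY : RightAction G Y) (bZ : RightAction G Z)
        (E : Cat.{u, u}) (ε : CatAction G E),
      Finite Y ∧ Finite Z ∧ Finite E ∧ (∀ p q : E, Finite (p ⟶ q)) ∧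
      WeakEquivCat (ρ.sum ((discAction bZ).sum ε)) ((discAction bY).sum ε) := by
  rintro ⟨Y, Z, -, -, E, -, -, -, hE, -, F, P, -, -, η, θ, -, -⟩
  let e : C ⊕ (Discrete Z ⊕ E) ≌ Discrete Y ⊕ E := .mk F P η.symm θ
  have : IsEmpty (NonDiscreteClasses C) := isEmpty_of_sum_equiv <|
    calc NonDiscreteClasses C ⊕ NonDiscreteClasses E
        ≃ NonDiscreteClasses C ⊕ NonDiscreteClasses (Discrete Z ⊕ E) :=
          Equiv.sumCongr (.refl _) ((Equiv.emptySum _ _).symm.trans nonDiscreteClassesSumEquiv)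
      _ ≃ NonDiscreteClasses (Discrete Y ⊕ E) :=
          nonDiscreteClassesSumEquiv.trans e.nonDiscreteClassesEquiv
      _ ≃ NonDiscreteClasses E := nonDiscreteClassesSumEquiv.symm.trans (Equiv.emptySum _ _)
  have := isDiscrete_skeleton_of_isEmpty_nonDiscreteClasses (A := C)
  exact (hC _).false ((skeletonEquivalence C).symm.trans (IsDiscrete.equivalenceDiscrete _))
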